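/- For an R-module M over a commutative ring, the Jacobson radical of M equals the intersection over all maximal ideals m of R of the submodules mM. -/
import Mathlib

/-- The Jacobson radical of a module: the intersection of all maximal (proper) submodules
(equal to `M` when there are none). -/
def moduleJacobson (R M : Type*) [Ring R] [AddCommGroup M] [Module R M] :
    Submodule R M :=
  sInf {N : Submodule R M | IsCoatom N}

/-- Given a maximal ideal `m` and `x ∉ m • ⊤`, there is a maximal submodule avoiding `x`. -/
lemma exists_coatom_not_mem {R M : Type*} [CommRing R] [AddCommGroup M] [Module R M]
    {m : Ideal R} (hm : m.IsMaximal) {x : M} (hx : x ∉ (m • ⊤ : Submodule R M)) :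
    ∃ N : Submodule R M, IsCoatom N ∧ x ∉ N := by
  -- Zorn on submodules containing `m • ⊤` and avoiding `x`.
  set S : Set (Submodule R M) := {N | (m • ⊤ : Submodule R M) ≤ N ∧ x ∉ N} with hS
  have zorn : ∀ c ⊆ S, IsChain (· ≤ ·) c → ∀ y ∈ c, ∃ ub ∈ S, ∀ z ∈ c, z ≤ ub := by
    intro c hcS hc y hyc
    refine ⟨sSup c, ⟨?_, ?_⟩, fun z hz => le_sSup hz⟩
    · exact le_trans (hcS hyc).1 (le_sSup hyc)
    · intro hxc
      obtain ⟨p, hpc, hxp⟩ := (Submodule.mem_sSup_of_directed ⟨y, hyc⟩ hc.directedOn).1 hxc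
      exact (hcS hpc).2 hxp
  obtain ⟨N, -, hNmax⟩ := zorn_le_nonempty₀ S zorn (m • ⊤) ⟨le_rfl, hx⟩
  obtain ⟨⟨hmN, hxN⟩, hmax⟩ := hNmax
  refine ⟨N, ⟨?_, ?_⟩, hxN⟩
  · intro h; exact hxN (h ▸ Submodule.mem_top)
  · intro P hP
    -- x ∈ P since P > N can't avoid x by maximality
    have hxP : x ∈ P := by
      by_contra hxP
      exact hP.ne (le_antisymm hP.le (hmax ⟨le_trans hmN hP.le, hxP⟩ hP.le))
    -- show P = ⊤
    rw [eq_top_iff]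
    intro y _
    by_cases hyN : y ∈ N
    · exact hP.le hyN
    -- N ⊔ span {y} strictly contains N, so contains x by maximality
    have hNy : x ∈ N ⊔ Submodule.span R {y} := by
      by_contra hxy
      exact hyN (hmax ⟨le_trans hmN le_sup_left, hxy⟩ le_sup_left
        (Submodule.mem_sup_right (Submodule.mem_span_singleton_self y)))
    obtain ⟨n, hn, z, hz, hnz⟩ := Submodule.mem_sup.1 hNy
    obtain ⟨r, rfl⟩ := Submodule.mem_span_singleton.1 hz
    -- r ∉ m, otherwise x ∈ N
    have hrm : r ∉ m := by
      intro hrm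
      exact hxN (hnz ▸ N.add_mem hn (hmN (Submodule.smul_mem_smul hrm Submodule.mem_top)))
    -- m maximal: m ⊔ span {r} = ⊤, so 1 = a + s * r with a ∈ m
    have htop : m ⊔ Ideal.span {r} = ⊤ := by
      refine hm.1.2 _ (lt_of_le_of_ne le_sup_left ?_)
      intro h
      exact hrm (h ▸ Ideal.mem_sup_right (Ideal.mem_span_singleton_self r))
    obtain ⟨a, ha, b, hb, hab⟩ := Submodule.mem_sup.1 (htop ▸ Submodule.mem_top (x := (1 : R)))
    obtain ⟨s, rfl⟩ := Ideal.mem_span_singleton'.1 hb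
    -- y = a • y + (s * r) • y, both in P
    have h1 : a • y ∈ P := hP.le (hmN (Submodule.smul_mem_smul ha Submodule.mem_top))
    have h2 : (s * r) • y ∈ P := by
      have : (s * r) • y = s • x - s • n := by
        rw [mul_smul, ← hnz, smul_add, smul_smul]; abel
      rw [this]
      exact P.sub_mem (P.smul_mem s hxP) (P.smul_mem s (hP.le hn))
    have : y = a • y + (s * r) • y := by
      rw [← add_smul, hab, one_smul]
    rw [this]
    exact P.add_mem h1 h2

/-- For a module `M` over a commutative ring `R`, the Jacobson radical of `M` equals the
intersection over all maximal ideals `m` of `R` of the submodules `mM`. -/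
theorem stmt14 (R M : Type*) [CommRing R] [AddCommGroup M] [Module R M] :
    moduleJacobson R M = ⨅ m : MaximalSpectrum R, (m.asIdeal • ⊤ : Submodule R M) := by
  apply le_antisymm
  · refine le_iInf fun m => ?_
    intro x hx
    by_contra hxm
    obtain ⟨N, hN, hxN⟩ := exists_coatom_not_mem m.2 hxm
    exact hxN (Submodule.mem_sInf.1 hx N hN)
  · refine le_sInf fun N hN => ?_
    haveI : IsSimpleModule R (M ⧸ N) := isSimpleModule_iff_isCoatom.2 hN
    have hmax : (Module.annihilator R (M ⧸ N)).IsMaximal :=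
      IsSimpleModule.annihilator_isMaximal
    refine le_trans (iInf_le _ ⟨Module.annihilator R (M ⧸ N), hmax⟩) ?_
    rw [Submodule.smul_le]
    intro r hr x _
    have : r • (Submodule.Quotient.mk x : M ⧸ N) = 0 := Module.mem_annihilator.1 hr _
    rwa [← Submodule.Quotient.mk_smul, Submodule.Quotient.mk_eq_zero] at this
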